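/- Let 0 ≤ α < 1 and β > 1. (i) If c = c_1…c_k and d = d_1…d_l are both prefixes of a and the concatenation cd belongs to L^{α,β}, then cd is a prefix of a. (ii) If c and d are both prefixes of b and cd ∈ L^{α,β}, then cd is a prefix of b. -/

import Mathlib

open Filter Topology MeasureTheory ENNReal
open scoped Classical

noncomputable section

namespace AB

/-- The (α,β)-transformation `T(x) = βx + α − ⌊βx + α⌋`. -/
def T (α β : ℝ) (x : ℝ) : ℝ := β * x + α - ⌊β * x + α⌋

/-- `λ = ⌈α+β⌉ − 1`, as a natural number. -/
def lamNat (α β : ℝ) : ℕ := (⌈α + β⌉ - 1).toNat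

/-- The digit of `x ∈ [0,1)`: the index `k` with `x ∈ J_k`, namely `⌊βx + α⌋`. -/
def digit (α β : ℝ) (x : ℝ) : ℕ := (⌊β * x + α⌋).toNat

/-- The (α,β)-expansion of `x`. -/
def iSeq (α β : ℝ) (x : ℝ) : ℕ → ℕ := fun n => digit α β ((T α β)^[n] x)

/-- The one-sided (α,β)-shift: closure (in the product topology) of the set of expansions. -/
def Xab (α β : ℝ) : Set (ℕ → ℕ) :=
  closure {s | ∃ x ∈ Set.Ico (0 : ℝ) 1, s = iSeq α β x}

/-- Word of given length read in a one-sided sequence starting at position `k`. -/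
def wordN (s : ℕ → ℕ) (k len : ℕ) : List ℕ := (List.range len).map fun i => s (k + i)

/-- The language of the (α,β)-shift: finite words appearing in points of `Xab`. -/
def Lang (α β : ℝ) : Set (List ℕ) :=
  {w | ∃ s ∈ Xab α β, ∃ k : ℕ, w = wordN s k w.length}

/-- `a = i_{α,β}(0)`. -/
def aSeq (α β : ℝ) : ℕ → ℕ := iSeq α β 0

/-- The prefix of length `l` of a sequence, as a word. -/
def pre (s : ℕ → ℕ) (l : ℕ) : List ℕ := (List.range l).map s

/-- Lexicographic (non-strict) order on words. -/
def wordLe (u v : List ℕ) : Prop := u = v ∨ List.Lex (· < ·) u v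

/-- Lexicographic (non-strict) order on one-sided sequences. -/
def seqLe (x y : ℕ → ℕ) : Prop :=
  x = y ∨ ∃ n : ℕ, (∀ i < n, x i = y i) ∧ x n < y n

/-- The largest `k ≤ |w|` such that the length-`k` suffix of `w` equals the length-`k`
prefix of `s` (this is `k1` for `s = a` and `k2` for `s = b`). -/
def kk (s : ℕ → ℕ) (w : List ℕ) : ℕ :=
  Nat.findGreatest (fun k => w.drop (w.length - k) = pre s k) w.length

/-- The set of finite prefixes of a sequence (`P^a`, `P^b`). -/
def Pset (s : ℕ → ℕ) : Set (List ℕ) := {u | ∃ l : ℕ, u = pre s l}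

/-- The distinguished suffix `s(w)`. -/
def sWord (a b : ℕ → ℕ) (w : List ℕ) : List ℕ :=
  if kk b w < kk a w then w.drop (w.length - kk a w)
  else if kk a w < kk b w then w.drop (w.length - kk b w)
  else []

/-- The hat operation on `P = P^a ∪ P^b` (for `β > 3`, `α = 1/β`). -/
def hatP (a b : ℕ → ℕ) (lam : ℕ) (u : List ℕ) : List ℕ :=
  if u = [] then []
  else if u ∈ Pset a then u.dropLast ++ [u.getLast?.getD 0 + 1]
  else if 3 ≤ u.getLast?.getD 0 then u.dropLast ++ [u.getLast?.getD 0 - 1]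
  else
    (u.set (u.length - kk a u.dropLast - 2) (u.getD (u.length - kk a u.dropLast - 2) 0 - 1)).set
      (u.length - kk a u.dropLast - 1) (lam - 1)

/-- `ŵ` for `w = v·s(w)`: replace the distinguished suffix by its hat. -/
def hatW (a b : ℕ → ℕ) (lam : ℕ) (w : List ℕ) : List ℕ :=
  w.take (w.length - (sWord a b w).length) ++ hatP a b lam (sWord a b w)

/-- `w̃`: the hat operation applied twice. -/
def tildeW (a b : ℕ → ℕ) (lam : ℕ) (w : List ℕ) : List ℕ :=
  hatW a b lam (hatW a b lam w)

/-- `z(u)` for `u ∈ P^b`. -/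
def zP (a b : ℕ → ℕ) (u : List ℕ) : ℕ :=
  if u = [] then 0
  else sSup ({k : ℕ | (u ++ pre (fun i => a (kk a u + i)) k) ∈ Pset b} ∪ {0})

/-- `z(w)` for a word `w` in the language. -/
def zW (a b : ℕ → ℕ) (w : List ℕ) : ℕ :=
  if kk a w < kk b w then zP a b (w.drop (w.length - kk b w)) else 0

/-- `z̄(n) = max{z(u) : u prefix of b, |u| ≤ n}`. -/
def zbar (a b : ℕ → ℕ) (n : ℕ) : ℕ :=
  (Finset.range (n + 1)).sup fun l => zP a b (pre b l)

/-- The natural extension `Σ^{α,β}`. -/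
def SigmaAB (α β : ℝ) : Set (ℤ → ℕ) :=
  {x | ∀ k : ℤ, (fun n : ℕ => x (k + n)) ∈ Xab α β}

/-- `σ^j` on two-sided sequences. -/
def shiftI {A : Type*} (j : ℤ) (x : ℤ → A) : ℤ → A := fun n => x (n + j)

/-- Word of given length read in a two-sided sequence starting at position `k`. -/
def wordZ (x : ℤ → ℕ) (k : ℤ) (len : ℕ) : List ℕ := (List.range len).map fun i => x (k + i)

/-- The map `g : L^{α,β} → {0,1}`. -/
def gW (a b : ℕ → ℕ) (w : List ℕ) : ℕ :=
  if kk a w = 0 ∧ 0 < kk b w ∧ b (kk b w) ≤ 1 then 0 else 1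

/-- `w^♯`: the word `w` placed at positions `k,…,k+|w|−1`, followed by `g(w)` at
position `k+|w|`, and `1` at all other positions. -/
def wSharp (a b : ℕ → ℕ) (k : ℤ) (w : List ℕ) : ℤ → ℕ :=
  fun j => if k ≤ j ∧ j < k + w.length then w.getD (j - k).toNat 1
           else if j = k + w.length then gW a b w else 1

/-- The finite approximation sets `E^n ⊆ Σ^{α,β}`. -/
def En (α β : ℝ) (b : ℕ → ℕ) (n : ℕ) : Set (ℤ → ℕ) :=
  {x | wordZ x (-(n : ℤ)) (2 * n + 1) ∈ Lang α β ∧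
       x ((n : ℤ) + 1) = gW (aSeq α β) b (wordZ x (-(n : ℤ)) (2 * n + 1)) ∧
       ∀ j : ℤ, j < -(n : ℤ) ∨ (n : ℤ) + 1 < j → x j = 1}

/-- `s(x_k^-) = ε` for the left-infinite word `x_{(-∞,k-1]}`: no nonempty suffix of it is a
prefix of `a` or of `b`. -/
def leftStar (a b : ℕ → ℕ) (x : ℤ → ℕ) (k : ℤ) : Prop :=
  (∀ K : ℕ, 1 ≤ K → ¬ ∀ i : ℕ, i < K → x (k - K + i) = a i) ∧
  (∀ K : ℕ, 1 ≤ K → ¬ ∀ i : ℕ, i < K → x (k - K + i) = b i)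

/-- `E^n_{[k,l]}(v)`. -/
def EnCyl (α β : ℝ) (b : ℕ → ℕ) (n : ℕ) (k l : ℤ) (v : List ℕ) : Set (ℤ → ℕ) :=
  {x ∈ En α β b n | wordZ x k (l - k + 1).toNat = v}

/-- `E^{*,n}_{[k,l]}(v)`. -/
def EnCylStar (α β : ℝ) (b : ℕ → ℕ) (n : ℕ) (k l : ℤ) (v : List ℕ) : Set (ℤ → ℕ) :=
  {x ∈ EnCyl α β b n k l v | leftStar (aSeq α β) b x k}

/-- The Birkhoff sum `∑_{j=−n}^{n} φ(σ^j x)`. -/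
def birkhoff (φ : (ℤ → ℕ) → ℝ) (n : ℕ) (x : ℤ → ℕ) : ℝ :=
  ∑ j ∈ Finset.Icc (-(n : ℤ)) (n : ℤ), φ (shiftI j x)

/-- `Ξ^n_{[k,l]}(v)`. -/
def Xi (α β : ℝ) (b : ℕ → ℕ) (φ : (ℤ → ℕ) → ℝ) (n : ℕ) (k l : ℤ) (v : List ℕ) : ℝ :=
  ∑' x : (EnCyl α β b n k l v), Real.exp (birkhoff φ n x.1)

/-- `Ξ^{*,n}_{[k,l]}(v)`. -/
def XiStar (α β : ℝ) (b : ℕ → ℕ) (φ : (ℤ → ℕ) → ℝ) (n : ℕ) (k l : ℤ) (v : List ℕ) : ℝ :=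
  ∑' x : (EnCylStar α β b n k l v), Real.exp (birkhoff φ n x.1)

/-- `δ_i(f)`, as an extended nonnegative real. -/
def oscE {A : Type*} (f : (ℤ → A) → ℝ) (i : ℤ) : ℝ≥0∞ :=
  ⨆ (x : ℤ → A) (y : ℤ → A) (_ : ∀ k : ℤ, k ≠ i → x k = y k), ENNReal.ofReal |f x - f y|

/-- `‖f‖_δ` for a function on the full shift. -/
def enormFull {A : Type*} (f : (ℤ → A) → ℝ) : ℝ≥0∞ := ∑' i : ℤ, oscE f i

/-- `‖f‖_δ` for a function on a subshift `X`: infimum over continuous extensions. -/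
def enormOn {A : Type*} [TopologicalSpace A] (X : Set (ℤ → A)) (f : (ℤ → A) → ℝ) : ℝ≥0∞ :=
  ⨅ (g : (ℤ → A) → ℝ) (_ : Continuous g) (_ : ∀ x ∈ X, g x = f x), enormFull g

/-- `f` has bounded total oscillations on `X` (i.e. `f ∈ B(X)`). -/
def BTO {A : Type*} [TopologicalSpace A] (X : Set (ℤ → A)) (f : (ℤ → A) → ℝ) : Prop :=
  ContinuousOn f X ∧ enormOn X f ≠ ⊤

/-- The real value of `‖f‖_δ`. -/
def dnorm {A : Type*} [TopologicalSpace A] (X : Set (ℤ → A)) (f : (ℤ → A) → ℝ) : ℝ :=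
  (enormOn X f).toReal

/-- The pressure `p(φ)`. -/
def pressure (α β : ℝ) (b : ℕ → ℕ) (φ : (ℤ → ℕ) → ℝ) : ℝ :=
  limUnder atTop fun n : ℕ =>
    Real.log (∑' x : (En α β b n), Real.exp (birkhoff φ n x.1)) / (2 * n + 1)

/-- `ν` is a tangent functional to the pressure at `φ` (an equilibrium measure for `φ`). -/
def IsTangent (α β : ℝ) (b : ℕ → ℕ) (φ : (ℤ → ℕ) → ℝ) (ν : Measure (ℤ → ℕ)) : Prop :=
  ∀ f : (ℤ → ℕ) → ℝ, ContinuousOn f (SigmaAB α β) →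
    pressure α β b φ + ∫ x, f x ∂ν ≤ pressure α β b (fun x => φ x + f x)

/-- The cylinder `[x_1 … x_m]` in `Σ^{α,β}`. -/
def cyl (α β : ℝ) (x : ℤ → ℕ) (m : ℕ) : Set (ℤ → ℕ) :=
  {y ∈ SigmaAB α β | ∀ i : ℕ, 1 ≤ i → i ≤ m → y (i : ℤ) = x (i : ℤ)}

/-- `ν` is a weak Gibbs measure for `ψ` on `Σ^{α,β}`. -/
def WeakGibbs (α β : ℝ) (ν : Measure (ℤ → ℕ)) (ψ : (ℤ → ℕ) → ℝ) : Prop :=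
  ∀ δ : ℝ, 0 < δ → ∃ N : ℕ, ∀ m : ℕ, N ≤ m → ∀ x ∈ SigmaAB α β,
    |Real.log (ν (cyl α β x m)).toReal / m -
      (∑ l ∈ Finset.Icc (1 : ℤ) (m : ℤ), ψ (shiftI l x)) / m| ≤ δ


/-- Concatenation `w·x` of a word and a one-sided sequence. -/
def wordApp (w : List ℕ) (x : ℕ → ℕ) : ℕ → ℕ :=
  fun n => if n < w.length then w.getD n 1 else x (n - w.length)

/-- `σ^k` on one-sided sequences. -/
def shiftN (k : ℕ) (s : ℕ → ℕ) : ℕ → ℕ := fun n => s (k + n)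

end AB

/-!
On `[0, 1)` the map `T` is increasing on each digit interval `J_k`, so two points with the same
first `n` digits keep their order under `T^n`; together with the monotonicity of the digit map this
makes `x ↦ i_{α,β}(x)` lexicographically monotone. Thus `a` is the smallest expansion, and `b`,
a limit from the left at `1`, dominates every expansion.

If `c·d`, with `c` and `d` prefixes of `a`, is read from some `y ∈ [0, 1)`, then `0` and `y` share
their first `|c|` digits, so `T^{|c|} 0 ≤ T^{|c|} y`. The expansion of `T^{|c|} 0` is then
squeezed between `a` and the expansion of `T^{|c|} y`, both of which begin with `d`; so `a`
continues with `d` after `c`. For `b` the squeeze is made from above, by points close to `1`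
whose expansions begin with long prefixes of `b`.
-/

namespace AB

open Set

section Words

@[simp]
theorem length_pre (s : ℕ → ℕ) (l : ℕ) : (pre s l).length = l := by simp [pre]

theorem pre_eq_pre_iff {s t : ℕ → ℕ} {n : ℕ} : pre s n = pre t n ↔ ∀ i < n, s i = t i := by
  simp [pre, List.map_inj_left]

theorem pre_add (s : ℕ → ℕ) (k l : ℕ) : pre s (k + l) = pre s k ++ pre (shiftN k s) l := by
  simp [pre, List.range_add, shiftN, Function.comp_def]

theorem pre_append_pre_mem_Pset {s : ℕ → ℕ} {k l : ℕ} (h : ∀ i < l, s (k + i) = s i) :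
    pre s k ++ pre s l ∈ Pset s :=
  ⟨k + l, by rw [pre_add, pre_eq_pre_iff.2 fun i hi => (h i hi).symm]; rfl⟩

theorem cylinder_mem_nhds {A : Type*} [TopologicalSpace A] [DiscreteTopology A]
    (s : ℕ → A) (n : ℕ) : {t : ℕ → A | ∀ i < n, t i = s i} ∈ 𝓝 s :=
  set_pi_mem_nhds (finite_Iio n) fun i _ => (isOpen_discrete {s i}).mem_nhds rfl

end Words

section Dynamics

variable {α β : ℝ}

theorem mapsTo_T : MapsTo (T α β) (Ico 0 1) (Ico 0 1) :=
  fun _ _ => ⟨Int.fract_nonneg _, Int.fract_lt_one _⟩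

theorem iterate_T_nonneg {x : ℝ} (hx : 0 ≤ x) (n : ℕ) : 0 ≤ (T α β)^[n] x := by
  cases n with
  | zero => exact hx
  | succ n =>
    rw [Function.iterate_succ_apply']
    exact Int.fract_nonneg _

theorem iSeq_iterate_T (x : ℝ) (k : ℕ) :
    iSeq α β ((T α β)^[k] x) = shiftN k (iSeq α β x) := by
  funext n
  simp only [iSeq, shiftN, ← Function.iterate_add_apply, add_comm]

theorem digit_mono (hβ : 0 ≤ β) : Monotone (digit α β) := fun _ _ hxy =>
  Int.toNat_le_toNat (Int.floor_le_floor (by nlinarith))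

theorem T_eq_sub_digit (hα : 0 ≤ α) (hβ : 0 ≤ β) {x : ℝ} (hx : 0 ≤ x) :
    T α β x = β * x + α - digit α β x := by
  have hfloor : (0 : ℤ) ≤ ⌊β * x + α⌋ := Int.floor_nonneg.2 (by positivity)
  rw [T, digit, ← Int.toNat_of_nonneg hfloor]
  norm_cast

theorem iterate_T_le_of_iSeq_eq (hα : 0 ≤ α) (hβ : 0 ≤ β) {x y : ℝ} (hx : 0 ≤ x) (hxy : x ≤ y)
    {n : ℕ} (h : ∀ i < n, iSeq α β x i = iSeq α β y i) : (T α β)^[n] x ≤ (T α β)^[n] y := by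
  induction n with
  | zero => exact hxy
  | succ n ih =>
    have hle := ih fun i hi => h i (Nat.lt_succ_of_lt hi)
    have hx' := iterate_T_nonneg (α := α) (β := β) hx n
    rw [Function.iterate_succ_apply', Function.iterate_succ_apply',
      T_eq_sub_digit hα hβ hx', T_eq_sub_digit hα hβ (hx'.trans hle)]
    have hdigit : digit α β ((T α β)^[n] x) = digit α β ((T α β)^[n] y) := h n n.lt_succ_self
    rw [hdigit]
    gcongr

theorem iSeq_le_of_iSeq_eq (hα : 0 ≤ α) (hβ : 0 ≤ β) {x y : ℝ} (hx : 0 ≤ x) (hxy : x ≤ y)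
    {n : ℕ} (h : ∀ i < n, iSeq α β x i = iSeq α β y i) : iSeq α β x n ≤ iSeq α β y n :=
  digit_mono hβ (iterate_T_le_of_iSeq_eq hα hβ hx hxy h)

theorem iSeq_eq_of_le_of_le (hα : 0 ≤ α) (hβ : 0 ≤ β) {x y z : ℝ} (hx : 0 ≤ x) (hxy : x ≤ y)
    (hyz : y ≤ z) {n : ℕ} (h : ∀ i < n, iSeq α β x i = iSeq α β z i) :
    ∀ i < n, iSeq α β y i = iSeq α β x i := by
  induction n with
  | zero => intro i hi; omega
  | succ n ih =>
    have ih' := ih fun i hi => h i (Nat.lt_succ_of_lt hi)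
    intro i hi
    rcases Nat.lt_succ_iff_lt_or_eq.1 hi with hi | rfl
    · exact ih' i hi
    · have hxy_digit := iSeq_le_of_iSeq_eq hα hβ hx hxy fun j hj => (ih' j hj).symm
      have hyz_digit := iSeq_le_of_iSeq_eq hα hβ (hx.trans hxy) hyz
        fun j hj => (ih' j hj).trans (h j (Nat.lt_succ_of_lt hj))
      have := h i i.lt_succ_self
      omega

theorem exists_iSeq_eq_of_tendsto {b : ℕ → ℕ} (hb : Tendsto (iSeq α β) (𝓝[<] (1 : ℝ)) (𝓝 b))
    (n : ℕ) {y : ℝ} (hy : y < 1) : ∃ x ∈ Ico y 1, ∀ i < n, iSeq α β x i = b i :=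
  nonempty_of_mem (inter_mem (Ico_mem_nhdsLT hy) (hb (cylinder_mem_nhds b n)))

theorem exists_iSeq_of_mem_Lang {w : List ℕ} (h : w ∈ Lang α β) :
    ∃ x ∈ Ico 0 1, w = pre (iSeq α β x) w.length := by
  obtain ⟨s, hs, m, hw⟩ := h
  obtain ⟨_, hcyl, x, hx, rfl⟩ :=
    mem_closure_iff_nhds.1 hs _ (cylinder_mem_nhds s (m + w.length))
  refine ⟨(T α β)^[m] x, mapsTo_T.iterate m hx, hw.trans ?_⟩
  rw [iSeq_iterate_T]
  exact pre_eq_pre_iff.2 fun i hi => (hcyl (m + i) (by omega)).symm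

theorem exists_iSeq_of_pre_append_pre_mem_Lang {s : ℕ → ℕ} {k l : ℕ}
    (h : pre s k ++ pre s l ∈ Lang α β) :
    ∃ w ∈ Ico 0 1, (∀ i < k, iSeq α β w i = s i) ∧
      ∀ i < l, iSeq α β ((T α β)^[k] w) i = s i := by
  obtain ⟨w, hw, hpre⟩ := exists_iSeq_of_mem_Lang h
  rw [List.length_append, length_pre, length_pre, pre_add, ← iSeq_iterate_T] at hpre
  obtain ⟨hk, hl⟩ := List.append_inj hpre (by simp)
  exact ⟨w, hw, pre_eq_pre_iff.1 hk.symm, pre_eq_pre_iff.1 hl.symm⟩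

theorem aSeq_add_eq_of_pre_append_pre_mem_Lang (hα : 0 ≤ α) (hβ : 0 ≤ β) {k l : ℕ}
    (h : pre (aSeq α β) k ++ pre (aSeq α β) l ∈ Lang α β) :
    ∀ i < l, aSeq α β (k + i) = aSeq α β i := by
  obtain ⟨w, hw, hk, hl⟩ := exists_iSeq_of_pre_append_pre_mem_Lang h
  have hle : (T α β)^[k] 0 ≤ (T α β)^[k] w :=
    iterate_T_le_of_iSeq_eq hα hβ le_rfl hw.1 fun i hi => (hk i hi).symm
  intro i hi
  have := iSeq_eq_of_le_of_le hα hβ le_rfl (iterate_T_nonneg le_rfl k) hle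
    (fun j hj => (hl j hj).symm) i hi
  rwa [iSeq_iterate_T] at this

theorem add_eq_of_pre_append_pre_mem_Lang_of_tendsto (hα : 0 ≤ α) (hβ : 0 ≤ β) {b : ℕ → ℕ}
    (hb : Tendsto (iSeq α β) (𝓝[<] (1 : ℝ)) (𝓝 b)) {k l : ℕ}
    (h : pre b k ++ pre b l ∈ Lang α β) : ∀ i < l, b (k + i) = b i := by
  obtain ⟨w, hw, hk, hl⟩ := exists_iSeq_of_pre_append_pre_mem_Lang h
  obtain ⟨x, hx, hxb⟩ := exists_iSeq_eq_of_tendsto hb (k + l) hw.2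
  have hle : (T α β)^[k] w ≤ (T α β)^[k] x :=
    iterate_T_le_of_iSeq_eq hα hβ hw.1 hx.1 fun i hi => (hk i hi).trans (hxb i (by omega)).symm
  obtain ⟨z, hz, hzb⟩ :=
    exists_iSeq_eq_of_tendsto hb l (mapsTo_T.iterate k ⟨hw.1.trans hx.1, hx.2⟩).2
  intro i hi
  have := iSeq_eq_of_le_of_le hα hβ (iterate_T_nonneg hw.1 k) hle hz.1
    (fun j hj => (hl j hj).trans (hzb j hj).symm) i hi
  rwa [iSeq_iterate_T, shiftN, hxb _ (by omega), hl i hi] at this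

end Dynamics

theorem stmt2_general (α β : ℝ) (hα0 : 0 ≤ α) (hβ : 1 < β)
    (b : ℕ → ℕ) (hb : Tendsto (iSeq α β) (𝓝[<] (1 : ℝ)) (𝓝 b))
    (c d : List ℕ) :
    (c ∈ Pset (aSeq α β) → d ∈ Pset (aSeq α β) → c ++ d ∈ Lang α β →
      c ++ d ∈ Pset (aSeq α β)) ∧
    (c ∈ Pset b → d ∈ Pset b → c ++ d ∈ Lang α β → c ++ d ∈ Pset b) := by
  have hβ0 : 0 ≤ β := zero_le_one.trans hβ.le
  constructor
  · rintro ⟨k, rfl⟩ ⟨l, rfl⟩ hcd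
    exact pre_append_pre_mem_Pset (aSeq_add_eq_of_pre_append_pre_mem_Lang hα0 hβ0 hcd)
  · rintro ⟨k, rfl⟩ ⟨l, rfl⟩ hcd
    exact pre_append_pre_mem_Pset (add_eq_of_pre_append_pre_mem_Lang_of_tendsto hα0 hβ0 hb hcd)

/-- concatenations of prefixes of `a` (resp. `b`) lying in the language are
prefixes of `a` (resp. `b`). -/
theorem stmt2 (α β : ℝ) (hα0 : 0 ≤ α) (hα1 : α < 1) (hβ : 1 < β)
    (b : ℕ → ℕ) (hb : Tendsto (iSeq α β) (𝓝[<] (1 : ℝ)) (𝓝 b))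
    (c d : List ℕ) :
    (c ∈ Pset (aSeq α β) → d ∈ Pset (aSeq α β) → c ++ d ∈ Lang α β →
      c ++ d ∈ Pset (aSeq α β)) ∧
    (c ∈ Pset b → d ∈ Pset b → c ++ d ∈ Lang α β → c ++ d ∈ Pset b) :=
  stmt2_general α β hα0 hβ b hb c d

end AB
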